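/- arXiv:1905.11371 — 2 statements merged into one kernel-verified Lean document; each statement's English description precedes it below -/
import Mathlib

section
/- If t is even and C ⊆ {0,1}^n is an orthogonal array OA(N,n,2,t), then B = {c|0 : c ∈ C} ∪ {(c+1̄)|1 : c ∈ C} ⊆ {0,1}^{n+1} (where c|b denotes appending the bit b and c+1̄ denotes the complement of all coordinates) is an orthogonal array OA(2N, n+1, 2, t+1). -/
/-!
If the last coordinate lies in `s`, the words of `B` agreeing with `g` on `s` all come from one
half of `B`, and they correspond to the words of `C` agreeing with `g` or with its complement on
the remaining `t` coordinates. Otherwise the count is `λ(g') + λ(g' + 1̄)`, where `λ` counts the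
words of `C` agreeing with a pattern on a set `s'` of `t + 1` coordinates. Strength `t` gives
`λ(h) + λ(h') = N / 2^t` whenever `h, h'` differ in exactly one coordinate of `s'`, so the
deviation `2^(t+1) λ(h) - N` changes sign at each such flip. Complementing all of `s'` takes an
odd number `t + 1` of flips, hence `λ(g') + λ(g' + 1̄) = N / 2^t`.
-/

open Finset

lemma apply_add_sum_eq_neg_one_pow_card_mul {ι G R : Type*} [AddCommMonoid G] [CommRing R]
    (f : G → R) {s : Finset ι} (v : ι → G) (hv : ∀ g, ∀ i ∈ s, f (g + v i) = -f g)
    (g : G) {u : Finset ι} (hu : u ⊆ s) : f (g + ∑ i ∈ u, v i) = (-1) ^ #u * f g := by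
  classical
  induction u using Finset.induction_on with
  | empty => simp
  | insert a u ha ih =>
    rw [sum_insert ha, add_comm (v a), ← add_assoc, hv _ a (hu (mem_insert_self a u)),
      ih ((subset_insert a u).trans hu), card_insert_of_notMem ha, pow_succ]
    ring

lemma Fin.two_ne_iff_eq_add_one {a b : Fin 2} : a ≠ b ↔ a = b + 1 := by
  revert a b; decide

lemma Fin.two_add_one_eq_iff {a b : Fin 2} : a + 1 = b ↔ a = b + 1 := by
  revert a b; decide

section OrthogonalArray

variable {n : ℕ}

def agreeCount (C : Finset (Fin n → Fin 2)) (s : Finset (Fin n)) (g : Fin n → Fin 2) : ℕ :=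
  #{x ∈ C | ∀ i ∈ s, x i = g i}

def IsOrthogonalArray (C : Finset (Fin n → Fin 2)) (t N : ℕ) : Prop :=
  ∀ s : Finset (Fin n), #s = t → ∀ g : Fin n → Fin 2, agreeCount C s g * 2 ^ t = N

lemma agreeCount_congr (C : Finset (Fin n → Fin 2)) {s : Finset (Fin n)} {g h : Fin n → Fin 2}
    (hgh : ∀ i ∈ s, g i = h i) : agreeCount C s g = agreeCount C s h :=
  congrArg card (filter_congr fun _ _ => forall₂_congr fun i hi => by rw [hgh i hi])

lemma agreeCount_eq_agreeCount_insert_add (C : Finset (Fin n → Fin 2)) {s : Finset (Fin n)}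
    {i : Fin n} (hi : i ∉ s) (g : Fin n → Fin 2) :
    agreeCount C s g =
      agreeCount C (insert i s) g + agreeCount C (insert i s) (g + Pi.single i 1) := by
  have hoff : ∀ j ∈ s, g j + (Pi.single i 1 : Fin n → Fin 2) j = g j := fun j hj => by
    rw [Pi.single_eq_of_ne (ne_of_mem_of_not_mem hj hi), add_zero]
  rw [agreeCount, agreeCount, agreeCount, ← card_filter_add_card_filter_not (· i = g i),
    filter_filter, filter_filter]
  congr 2 <;> ext x
  · simp only [mem_filter, forall_mem_insert]
    tauto
  · simp +contextual only [mem_filter, forall_mem_insert, hoff, Pi.add_apply, Pi.single_eq_same,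
      Fin.two_ne_iff_eq_add_one]
    tauto

lemma IsOrthogonalArray.agreeCount_add_agreeCount_add_single {C : Finset (Fin n → Fin 2)}
    {t N : ℕ} (hC : IsOrthogonalArray C t N) {s : Finset (Fin n)} (hs : #s = t + 1) {i : Fin n}
    (hi : i ∈ s) (g : Fin n → Fin 2) :
    (agreeCount C s g + agreeCount C s (g + Pi.single i 1)) * 2 ^ t = N := by
  rw [← insert_erase hi, ← agreeCount_eq_agreeCount_insert_add C (notMem_erase i s)]
  exact hC _ (by rw [card_erase_of_mem hi, hs, Nat.add_sub_cancel]) g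

lemma IsOrthogonalArray.agreeCount_add_agreeCount_add_one {C : Finset (Fin n → Fin 2)}
    {t N : ℕ} (hC : IsOrthogonalArray C t N) (ht : Even t) {s : Finset (Fin n)}
    (hs : #s = t + 1) (g : Fin n → Fin 2) :
    (agreeCount C s g + agreeCount C s (g + 1)) * 2 ^ t = N := by
  set f : (Fin n → Fin 2) → ℤ := fun h => 2 * agreeCount C s h * 2 ^ t - N
  have hflip : ∀ h, ∀ i ∈ s, f (h + Pi.single i 1) = -f h := fun h i hi => by
    have hpair : ((agreeCount C s h + agreeCount C s (h + Pi.single i 1)) * 2 ^ t : ℤ) = N := by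
      exact_mod_cast hC.agreeCount_add_agreeCount_add_single hs hi h
    simp only [f]
    linear_combination 2 * hpair
  have hsum : agreeCount C s (g + ∑ i ∈ s, Pi.single i 1) = agreeCount C s (g + 1) :=
    agreeCount_congr C fun j hj => by simp [hj]
  have hcompl := apply_add_sum_eq_neg_one_pow_card_mul f _ hflip g subset_rfl
  rw [hs, ht.add_one.neg_one_pow] at hcompl
  simp only [f, hsum] at hcompl
  zify
  linarith

def complementExtension (C : Finset (Fin n → Fin 2)) : Finset (Fin (n + 1) → Fin 2) :=
  C.image (fun c => Fin.snoc c 0) ∪ C.image (fun c => Fin.snoc (fun i => c i + 1) 1)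

lemma injective_snoc_add_one :
    Function.Injective fun c : Fin n → Fin 2 =>
      (Fin.snoc (fun i => c i + 1) 1 : Fin (n + 1) → Fin 2) :=
  fun _ _ h => funext fun i => by simpa using congrFun h i.castSucc

lemma disjoint_image_snoc_zero_image_snoc_one (C : Finset (Fin n → Fin 2)) :
    Disjoint (C.image fun c => (Fin.snoc c 0 : Fin (n + 1) → Fin 2))
      (C.image fun c => Fin.snoc (fun i => c i + 1) 1) := by
  simp [disjoint_left]

lemma card_complementExtension (C : Finset (Fin n → Fin 2)) :
    #(complementExtension C) = 2 * #C := by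
  rw [complementExtension, card_union_of_disjoint (disjoint_image_snoc_zero_image_snoc_one C),
    card_image_of_injective _ (Fin.snoc_left_injective _),
    card_image_of_injective _ injective_snoc_add_one, two_mul]

lemma Fin.card_preimage_castSucc (s : Finset (Fin (n + 1))) :
    #(s.preimage Fin.castSucc (Fin.castSucc_injective n).injOn) = #(s.erase (Fin.last n)) := by
  rw [card_preimage, ← filter_ne']
  exact congrArg card (filter_congr fun _ _ => Fin.exists_castSucc_eq)

lemma Fin.forall_mem_snoc_eq_iff (s : Finset (Fin (n + 1))) (c : Fin n → Fin 2) (b : Fin 2)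
    (g : Fin (n + 1) → Fin 2) :
    (∀ i ∈ s, (Fin.snoc c b : Fin (n + 1) → Fin 2) i = g i) ↔
      (Fin.last n ∈ s → g (Fin.last n) = b) ∧
        ∀ j ∈ s.preimage Fin.castSucc (Fin.castSucc_injective n).injOn, c j = Fin.init g j := by
  rw [Fin.forall_fin_succ']
  simp [Fin.init, eq_comm, and_comm]

lemma agreeCount_complementExtension (C : Finset (Fin n → Fin 2)) (s : Finset (Fin (n + 1)))
    (g : Fin (n + 1) → Fin 2) :
    agreeCount (complementExtension C) s g =
      (if Fin.last n ∈ s → g (Fin.last n) = 0 then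
        agreeCount C (s.preimage Fin.castSucc (Fin.castSucc_injective n).injOn) (Fin.init g)
        else 0) +
      (if Fin.last n ∈ s → g (Fin.last n) = 1 then
        agreeCount C (s.preimage Fin.castSucc (Fin.castSucc_injective n).injOn) (Fin.init g + 1)
        else 0) := by
  rw [agreeCount, complementExtension, filter_union, card_union_of_disjoint
    ((disjoint_image_snoc_zero_image_snoc_one C).mono (filter_subset _ _) (filter_subset _ _)),
    filter_image, filter_image, card_image_of_injective _ (Fin.snoc_left_injective _),
    card_image_of_injective _ injective_snoc_add_one]
  congr 1 <;> split_ifs with h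
  · exact congrArg card (filter_congr fun c _ => by
      rw [Fin.forall_mem_snoc_eq_iff, and_iff_right h])
  · exact card_eq_zero.2 (filter_eq_empty_iff.2 fun c _ hc =>
      h ((Fin.forall_mem_snoc_eq_iff ..).1 hc).1)
  · exact congrArg card (filter_congr fun c _ => by
      simp only [Fin.forall_mem_snoc_eq_iff, and_iff_right h, Fin.two_add_one_eq_iff]; rfl)
  · exact card_eq_zero.2 (filter_eq_empty_iff.2 fun c _ hc =>
      h ((Fin.forall_mem_snoc_eq_iff ..).1 hc).1)

end OrthogonalArray

/-- If t is even and C is an OA(N,n,2,t), then B = C|0 ∪ (C+1̄)|1 is an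
OA(2N, n+1, 2, t+1). -/
theorem stmt_4 (n t N : ℕ) (ht : Even t) (C : Finset (Fin n → Fin 2))
    (hcard : C.card = N)
    (hOA : ∀ s : Finset (Fin n), s.card = t → ∀ g : Fin n → Fin 2,
      (C.filter (fun x => ∀ i ∈ s, x i = g i)).card * 2 ^ t = N) :
    let B : Finset (Fin (n + 1) → Fin 2) :=
      C.image (fun c => Fin.snoc c 0) ∪ C.image (fun c => Fin.snoc (fun i => c i + 1) 1);
    B.card = 2 * N ∧
    ∀ s : Finset (Fin (n + 1)), s.card = t + 1 → ∀ g : Fin (n + 1) → Fin 2,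
      (B.filter (fun x => ∀ i ∈ s, x i = g i)).card * 2 ^ (t + 1) = 2 * N := by
  intro B
  have hC : IsOrthogonalArray C t N := hOA
  refine ⟨by rw [← hcard]; exact card_complementExtension C, fun s hs g => ?_⟩
  change agreeCount (complementExtension C) s g * _ = _
  rw [agreeCount_complementExtension, pow_succ', mul_left_comm, mul_right_inj' two_ne_zero]
  by_cases hlast : Fin.last n ∈ s
  · have hs' : #(s.preimage Fin.castSucc (Fin.castSucc_injective n).injOn) = t := by
      rw [Fin.card_preimage_castSucc, card_erase_of_mem hlast, hs, Nat.add_sub_cancel]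
    rcases (by decide : ∀ b : Fin 2, b = 0 ∨ b = 1) (g (Fin.last n)) with hg | hg <;>
      simp [hlast, hg, hC _ hs']
  · have hs' : #(s.preimage Fin.castSucc (Fin.castSucc_injective n).injOn) = t + 1 := by
      rw [Fin.card_preimage_castSucc, erase_eq_of_notMem hlast, hs]
    simp only [hlast, false_implies, if_true]
    exact hC.agreeCount_add_agreeCount_add_one ht hs' _
end

section
/- Let t be even and let C ⊆ {0,1}^n be an orthogonal array OA(N,n,2,t) with N = 2^n (1 - (n+1)/(2(t+2))). Let C' = C + 1̄ (coordinatewise complement of C) and C'' = {0,1}^n \ (C ∪ C'). Then C and C' are disjoint and (C, C', C'') is an equitable 3-partition of Q_n with quotient matrix [[0, a, n-a],[a, 0, n-a],[a+1, a+1, n-2a-2]], where a = 2t - n + 2. -/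
/-!
Let `f` be the indicator of `C` and `A = a + 1 = 2t + 3 - n`. The operator
`L = Adj + A • id + (antipodal map)` on functions on `Q_n` is diagonalised by the Walsh characters
`χ_S`, with eigenvalue `λ_S = n - 2|S| + A + (-1)^|S|`. Being an orthogonal array of strength
`t`, `C` has `f̂(S) = 0` for `0 < |S| ≤ t`, while for `|S| > t` we have `λ_S ≤ 0` because `t` is
even. Since `Lf ≥ A` on `C`, Parseval gives `∑_{S ≠ ∅} λ_S f̂(S)² ≥ 2^n A N - λ_∅ N²`, and the
value of `N` makes the right side zero. Hence every term with `S ≠ ∅` vanishes, `Lf` has the Walsh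
transform of the constant `A`, and so `Lf ≡ A`. This identity,
`#(N(v) ∩ C) + A [v ∈ C] + [v + 1̄ ∈ C] = A`, yields all entries of the quotient matrix.
-/

open Finset

namespace Hypercube

variable {n : ℕ}

lemma fin_two_add_self (a : Fin 2) : a + a = 0 := by revert a; decide

lemma add_self_eq_zero (x : Fin n → Fin 2) : x + x = 0 :=
  funext fun i => fin_two_add_self (x i)

lemma add_add_cancel (x y : Fin n → Fin 2) : x + y + y = x := by
  rw [add_assoc, add_self_eq_zero, add_zero]

lemma add_eq_zero_iff_eq {x y : Fin n → Fin 2} : x + y = 0 ↔ x = y := by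
  rw [add_eq_zero_iff_eq_neg, neg_eq_of_add_eq_zero_left (add_self_eq_zero y)]

def walsh (S : Finset (Fin n)) (x : Fin n → Fin 2) : ℤ := ∏ i ∈ S, (-1) ^ (x i : ℕ)

lemma walsh_add (S : Finset (Fin n)) (x y : Fin n → Fin 2) :
    walsh S (x + y) = walsh S x * walsh S y := by
  have h : ∀ a b : Fin 2, (-1 : ℤ) ^ ((a + b : Fin 2) : ℕ) = (-1) ^ (a : ℕ) * (-1) ^ (b : ℕ) :=
    by decide
  simp only [walsh, ← prod_mul_distrib, Pi.add_apply, h]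

lemma walsh_single (S : Finset (Fin n)) (i : Fin n) :
    walsh S (Pi.single i 1) = if i ∈ S then -1 else 1 := by
  split_ifs with hi
  · rw [walsh, ← mul_prod_erase S _ hi, prod_eq_one fun j hj => ?_]
    · simp
    · simp [ne_of_mem_erase hj]
  · refine prod_eq_one fun j hj => ?_
    simp [show j ≠ i from fun h => hi (h ▸ hj)]

lemma walsh_one (S : Finset (Fin n)) : walsh S 1 = (-1) ^ #S := by
  simp [walsh]

lemma sum_walsh_eq_ite (S : Finset (Fin n)) :
    ∑ x, walsh S x = if S = ∅ then 2 ^ n else 0 := by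
  split_ifs with hS
  · simp [hS, walsh]
  · obtain ⟨i, hi⟩ := nonempty_iff_ne_empty.mpr hS
    have h := Fintype.sum_equiv (Equiv.addRight (Pi.single i 1))
      (fun x => walsh S (x + Pi.single i 1)) (walsh S) (fun _ => rfl)
    simp only [walsh_add, ← sum_mul, walsh_single, if_pos hi] at h
    linarith

lemma sum_walsh_finset_eq_ite (z : Fin n → Fin 2) :
    ∑ S, walsh S z = if z = 0 then 2 ^ n else 0 := by
  have h : ∑ S, walsh S z = ∏ i, ((-1) ^ (z i : ℕ) + 1) := by
    rw [prod_add, ← powerset_univ]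
    simp [walsh]
  rw [h]
  split_ifs with hz
  · simp [hz]
  · obtain ⟨i, hi⟩ := Function.ne_iff.mp hz
    refine prod_eq_zero (mem_univ i) ?_
    rw [Fin.eq_one_of_ne_zero _ hi]
    rfl

def walshTransform (X : (Fin n → Fin 2) → ℤ) (S : Finset (Fin n)) : ℤ :=
  ∑ x, X x * walsh S x

lemma walshTransform_inversion (X : (Fin n → Fin 2) → ℤ) (y : Fin n → Fin 2) :
    ∑ S, walshTransform X S * walsh S y = 2 ^ n * X y := by
  simp only [walshTransform, sum_mul, mul_assoc, ← walsh_add]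
  rw [sum_comm]
  simp only [← mul_sum, sum_walsh_finset_eq_ite, add_eq_zero_iff_eq, mul_ite, mul_zero]
  rw [sum_ite_eq']
  simp [mul_comm]

lemma walshTransform_injective : Function.Injective (walshTransform (n := n)) := by
  intro X Y h
  funext y
  have hy := walshTransform_inversion X y
  rw [h, walshTransform_inversion] at hy
  exact mul_right_injective₀ (pow_ne_zero n two_ne_zero) hy.symm

lemma sum_walshTransform_mul (X Y : (Fin n → Fin 2) → ℤ) :
    ∑ S, walshTransform X S * walshTransform Y S = 2 ^ n * ∑ y, X y * Y y := by
  calc ∑ S, walshTransform X S * walshTransform Y S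
      = ∑ y, Y y * ∑ S, walshTransform X S * walsh S y := by
        have hY : ∀ S, walshTransform Y S = ∑ y, Y y * walsh S y := fun _ => rfl
        simp only [hY, mul_sum]
        rw [sum_comm]
        exact sum_congr rfl fun _ _ => sum_congr rfl fun _ _ => by ring
    _ = 2 ^ n * ∑ y, X y * Y y := by
        simp only [walshTransform_inversion, mul_sum]
        exact sum_congr rfl fun _ _ => by ring

lemma walshTransform_add (X Y : (Fin n → Fin 2) → ℤ) (S : Finset (Fin n)) :
    walshTransform (fun x => X x + Y x) S = walshTransform X S + walshTransform Y S := by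
  simp [walshTransform, add_mul, sum_add_distrib]

lemma walshTransform_sum {ι : Type*} (s : Finset ι) (X : ι → (Fin n → Fin 2) → ℤ)
    (S : Finset (Fin n)) :
    walshTransform (fun x => ∑ i ∈ s, X i x) S = ∑ i ∈ s, walshTransform (X i) S := by
  simp only [walshTransform, sum_mul]
  exact sum_comm

lemma walshTransform_const_mul (c : ℤ) (X : (Fin n → Fin 2) → ℤ) (S : Finset (Fin n)) :
    walshTransform (fun x => c * X x) S = c * walshTransform X S := by
  simp [walshTransform, mul_sum, mul_assoc]

lemma walshTransform_const (c : ℤ) (S : Finset (Fin n)) :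
    walshTransform (fun _ => c) S = if S = ∅ then 2 ^ n * c else 0 := by
  simp only [walshTransform, ← mul_sum, sum_walsh_eq_ite]
  split_ifs <;> ring

lemma walshTransform_comp_add (X : (Fin n → Fin 2) → ℤ) (y : Fin n → Fin 2)
    (S : Finset (Fin n)) :
    walshTransform (fun x => X (x + y)) S = walsh S y * walshTransform X S := by
  rw [walshTransform, ← Fintype.sum_equiv (Equiv.addRight y) (fun x => X x * walsh S (x + y)) _
    (fun x => by simp [add_add_cancel])]
  simp only [walsh_add, walshTransform, mul_sum]
  exact sum_congr rfl fun _ _ => by ring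

lemma sum_ite_mem_neg_one_one (S : Finset (Fin n)) :
    ∑ i, (if i ∈ S then (-1 : ℤ) else 1) = n - 2 * #S := by
  have h := card_add_card_compl S
  rw [Fintype.card_fin] at h
  rw [sum_ite, filter_mem_eq_inter, univ_inter, filter_notMem_eq_sdiff, ← compl_eq_univ_sdiff]
  simp only [sum_neg_distrib, sum_const, Int.nsmul_eq_mul, mul_one]
  omega

lemma walshTransform_sum_single (X : (Fin n → Fin 2) → ℤ) (S : Finset (Fin n)) :
    walshTransform (fun x => ∑ i, X (x + Pi.single i 1)) S =
      (n - 2 * #S) * walshTransform X S := by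
  simp only [walshTransform_sum, walshTransform_comp_add, walsh_single, ← sum_mul,
    sum_ite_mem_neg_one_one]

lemma hammingNorm_eq_one_iff (z : Fin n → Fin 2) :
    hammingNorm z = 1 ↔ ∃ i, z = Pi.single i 1 := by
  rw [hammingNorm, card_eq_one]
  refine exists_congr fun i => ⟨fun h => funext fun j => ?_, fun h => ?_⟩
  · have hj : z j ≠ 0 ↔ j = i := by simpa using congrArg (j ∈ ·) h
    by_cases hji : j = i
    · subst hji
      simpa using Fin.eq_one_of_ne_zero _ (hj.mpr rfl)
    · simpa [hji] using hj
  · ext j; by_cases hji : j = i <;> simp [h, hji]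

lemma hammingDist_eq_one_iff (v w : Fin n → Fin 2) :
    hammingDist v w = 1 ↔ ∃ i, w = v + Pi.single i 1 := by
  simp only [hammingDist_eq_hammingNorm, hammingNorm_eq_one_iff, neg_add_eq_iff_eq_add]

lemma sum_hammingDist_eq_one {M : Type*} [AddCommMonoid M] (v : Fin n → Fin 2)
    (f : (Fin n → Fin 2) → M) :
    ∑ w with hammingDist v w = 1, f w = ∑ i, f (v + Pi.single i 1) := by
  have h : ({w | hammingDist v w = 1} : Finset _) = univ.image (fun i => v + Pi.single i 1) := by
    ext w
    simp only [mem_filter, mem_univ, true_and, mem_image, hammingDist_eq_one_iff]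
    exact exists_congr fun _ => eq_comm
  rw [h, sum_image]
  intro i _ j _ hij
  have := congrFun (add_left_cancel hij) i
  by_contra hne
  simp [hne] at this

def indicator (C : Finset (Fin n → Fin 2)) (x : Fin n → Fin 2) : ℤ := if x ∈ C then 1 else 0

def neighborCount (C : Finset (Fin n → Fin 2)) (v : Fin n → Fin 2) : ℕ :=
  #{w ∈ C | hammingDist v w = 1}

lemma indicator_nonneg (C : Finset (Fin n → Fin 2)) (x : Fin n → Fin 2) :
    0 ≤ indicator C x := by
  unfold indicator; split_ifs <;> norm_num

lemma neighborCount_eq_sum (C : Finset (Fin n → Fin 2)) (v : Fin n → Fin 2) :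
    (neighborCount C v : ℤ) = ∑ i, indicator C (v + Pi.single i 1) := by
  rw [← sum_hammingDist_eq_one, neighborCount]
  simp only [indicator, sum_boole, Nat.cast_inj]
  congr 1
  ext w
  simp [and_comm]

lemma sum_indicator (C : Finset (Fin n → Fin 2)) : ∑ x, indicator C x = #C := by
  simp [indicator]

lemma walshTransform_indicator (C : Finset (Fin n → Fin 2)) (S : Finset (Fin n)) :
    walshTransform (indicator C) S = ∑ x ∈ C, walsh S x := by
  simp [walshTransform, indicator]

lemma walshTransform_indicator_empty (C : Finset (Fin n → Fin 2)) :
    walshTransform (indicator C) ∅ = #C := by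
  simp [walshTransform_indicator, walsh]

lemma walshTransform_indicator_eq_zero {C : Finset (Fin n → Fin 2)} {t N : ℕ} (htn : t ≤ n)
    (hOA : ∀ s : Finset (Fin n), #s = t → ∀ g : Fin n → Fin 2,
      #{x ∈ C | ∀ i ∈ s, x i = g i} * 2 ^ t = N)
    {S : Finset (Fin n)} (hS : S ≠ ∅) (hSt : #S ≤ t) :
    walshTransform (indicator C) S = 0 := by
  -- Average `walsh S` over the `K` words agreeing with `v ∈ C` on some `t`-set `s ⊇ S`: after
  -- swapping the sums, the orthogonal-array counts turn this into `N * ∑ g, walsh S g = 0`.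
  obtain ⟨s, hSs, -, hst⟩ := exists_subsuperset_card_eq (subset_univ S) hSt (by simpa using htn)
  set K := #{g : Fin n → Fin 2 | ∀ i ∈ s, 0 = g i}
  have hK : ∀ v : Fin n → Fin 2, #{g : Fin n → Fin 2 | ∀ i ∈ s, v i = g i} = K := fun v =>
    (card_equiv (Equiv.addRight v) fun g => by simp [eq_comm]).symm
  have hagree : ∀ v g : Fin n → Fin 2, (∀ i ∈ s, v i = g i) → walsh S g = walsh S v :=
    fun v g h => prod_congr rfl fun i hi => by rw [h i (hSs hi)]
  have hK0 : K ≠ 0 := card_ne_zero.mpr ⟨0, by simp⟩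
  have key : (K : ℤ) * (walshTransform (indicator C) S * 2 ^ t) = 0 := calc
    _ = ∑ v ∈ C, ∑ g with ∀ i ∈ s, v i = g i, walsh S g * 2 ^ t := by
      rw [walshTransform_indicator, sum_mul, mul_sum]
      refine sum_congr rfl fun v _ => ?_
      rw [sum_congr rfl fun g hg => by rw [hagree v g (mem_filter.mp hg).2], sum_const, hK,
        nsmul_eq_mul]
    _ = ∑ g, ∑ v ∈ C with ∀ i ∈ s, v i = g i, walsh S g * 2 ^ t :=
      sum_comm' fun v g => by simp
    _ = ∑ g, walsh S g * N := by
      refine sum_congr rfl fun g _ => ?_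
      rw [sum_const, nsmul_eq_mul, mul_left_comm]
      exact congrArg (walsh S g * ·) (mod_cast hOA s hst g)
    _ = 0 := by rw [← sum_mul, sum_walsh_eq_ite, if_neg hS, zero_mul]
  simpa [hK0] using key

def adjPlusAntipodal (A : ℤ) (X : (Fin n → Fin 2) → ℤ) (x : Fin n → Fin 2) : ℤ :=
  ∑ i, X (x + Pi.single i 1) + A * X x + X (x + 1)

def eigenvalue (A : ℤ) (S : Finset (Fin n)) : ℤ := n - 2 * #S + A + (-1) ^ #S

lemma walshTransform_adjPlusAntipodal (A : ℤ) (X : (Fin n → Fin 2) → ℤ)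
    (S : Finset (Fin n)) :
    walshTransform (adjPlusAntipodal A X) S = eigenvalue A S * walshTransform X S := by
  unfold adjPlusAntipodal
  simp only [walshTransform_add, walshTransform_sum_single, walshTransform_const_mul,
    walshTransform_comp_add, walsh_one, eigenvalue]
  ring

lemma sum_eigenvalue_mul_sq (A : ℤ) (X : (Fin n → Fin 2) → ℤ) :
    ∑ S, eigenvalue A S * walshTransform X S ^ 2 =
      2 ^ n * ∑ x, adjPlusAntipodal A X x * X x := by
  rw [← sum_walshTransform_mul]
  simp only [walshTransform_adjPlusAntipodal, sq, mul_assoc]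

lemma eigenvalue_empty (A : ℤ) : eigenvalue (n := n) A ∅ = n + A + 1 := by
  simp [eigenvalue]

lemma eigenvalue_nonpos {t : ℕ} (ht : Even t) {S : Finset (Fin n)} (htS : t < #S) :
    eigenvalue (2 * t + 3 - n) S ≤ 0 := by
  rw [eigenvalue]
  obtain ⟨t, rfl⟩ := ht
  rcases Nat.even_or_odd #S with hS | hS
  · rw [hS.neg_one_pow]
    obtain ⟨k, hk⟩ := hS
    omega
  · rw [hS.neg_one_pow]
    omega

lemma adjPlusAntipodal_indicator (A : ℤ) (C : Finset (Fin n → Fin 2)) (v : Fin n → Fin 2) :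
    adjPlusAntipodal A (indicator C) v =
      neighborCount C v + A * indicator C v + indicator C (v + 1) := by
  rw [adjPlusAntipodal, neighborCount_eq_sum]

lemma mul_indicator_le_adjPlusAntipodal_mul (A : ℤ) (C : Finset (Fin n → Fin 2))
    (v : Fin n → Fin 2) :
    A * indicator C v ≤ adjPlusAntipodal A (indicator C) v * indicator C v := by
  rw [adjPlusAntipodal_indicator]
  by_cases hv : v ∈ C
  · have := indicator_nonneg C (v + 1)
    rw [indicator, if_pos hv]
    linarith [(neighborCount C v).cast_nonneg (α := ℤ)]
  · simp [indicator, hv]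

section Delsarte

variable {C : Finset (Fin n → Fin 2)} {t : ℕ}

theorem eigenvalue_mul_walshTransform_indicator_eq_zero (ht : Even t)
    (hvanish : ∀ S : Finset (Fin n), S ≠ ∅ → #S ≤ t →
      walshTransform (indicator C) S = 0)
    (hcard : (#C : ℤ) * (2 * t + 4) = 2 ^ n * (2 * t + 3 - n)) {S : Finset (Fin n)}
    (hS : S ≠ ∅) :
    eigenvalue (2 * t + 3 - n) S * walshTransform (indicator C) S = 0 := by
  set A : ℤ := 2 * t + 3 - n
  have hterm :
      ∀ S ∈ univ.erase ∅, eigenvalue A S * walshTransform (indicator C) S ^ 2 ≤ 0 := by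
    intro S hS
    rcases le_or_gt #S t with hSt | htS
    · simp [hvanish S (ne_of_mem_erase hS) hSt]
    · exact mul_nonpos_of_nonpos_of_nonneg (eigenvalue_nonpos ht htS) (sq_nonneg _)
  have hempty : eigenvalue A (∅ : Finset (Fin n)) * walshTransform (indicator C) ∅ ^ 2 =
      2 ^ n * (A * #C) := by
    rw [eigenvalue_empty, walshTransform_indicator_empty]
    linear_combination (#C : ℤ) * hcard
  have hle : A * #C ≤ ∑ x, adjPlusAntipodal A (indicator C) x * indicator C x := by
    rw [← sum_indicator, mul_sum]
    exact sum_le_sum fun x _ => mul_indicator_le_adjPlusAntipodal_mul A C x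
  have hparseval := sum_eigenvalue_mul_sq A (indicator C)
  rw [← add_sum_erase _ _ (mem_univ ∅), hempty] at hparseval
  have hsum : ∑ S ∈ univ.erase ∅, eigenvalue A S * walshTransform (indicator C) S ^ 2 = 0 :=
    le_antisymm (sum_nonpos hterm) (by nlinarith [pow_pos (two_pos (α := ℤ)) n])
  simpa using (sum_eq_zero_iff_of_nonpos hterm).mp hsum S (mem_erase.mpr ⟨hS, mem_univ S⟩)

theorem adjPlusAntipodal_indicator_eq_const (ht : Even t)
    (hvanish : ∀ S : Finset (Fin n), S ≠ ∅ → #S ≤ t →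
      walshTransform (indicator C) S = 0)
    (hcard : (#C : ℤ) * (2 * t + 4) = 2 ^ n * (2 * t + 3 - n)) :
    adjPlusAntipodal (2 * t + 3 - n) (indicator C) = fun _ => (2 * t + 3 - n : ℤ) := by
  refine walshTransform_injective (funext fun S => ?_)
  rw [walshTransform_adjPlusAntipodal, walshTransform_const]
  split_ifs with hS
  · rw [hS, eigenvalue_empty, walshTransform_indicator_empty]
    linear_combination hcard
  · exact eigenvalue_mul_walshTransform_indicator_eq_zero ht hvanish hcard hS

end Delsarte

lemma hammingDist_add_one (v w : Fin n → Fin 2) :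
    hammingDist v (w + 1) = hammingDist (v + 1) w := by
  simp only [hammingDist_eq_hammingNorm, neg_eq_of_add_eq_zero_left (add_self_eq_zero _)]
  abel_nf

lemma mem_image_add_one {C : Finset (Fin n → Fin 2)} {v : Fin n → Fin 2} :
    v ∈ C.image (· + 1) ↔ v + 1 ∈ C := by
  rw [mem_image]
  constructor
  · rintro ⟨w, hw, rfl⟩
    rwa [add_add_cancel]
  · exact fun h => ⟨v + 1, h, add_add_cancel v 1⟩

lemma neighborCount_image_add_one (C : Finset (Fin n → Fin 2)) (v : Fin n → Fin 2) :
    neighborCount (C.image (· + 1)) v = neighborCount C (v + 1) := by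
  rw [neighborCount, filter_image, card_image_of_injective _ (add_left_injective 1)]
  simp only [hammingDist_add_one, neighborCount]

lemma card_hammingDist_eq_one (v : Fin n → Fin 2) : #{w | hammingDist v w = 1} = n := by
  rw [card_eq_sum_ones, sum_hammingDist_eq_one]
  simp

lemma neighborCount_add_add_compl {C D : Finset (Fin n → Fin 2)} (hCD : Disjoint C D)
    (v : Fin n → Fin 2) :
    neighborCount C v + neighborCount D v + neighborCount (C ∪ D)ᶜ v = n := by
  refine Eq.trans ?_ (card_hammingDist_eq_one v)
  rw [neighborCount, neighborCount, neighborCount,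
    ← card_union_of_disjoint (disjoint_filter_filter hCD), ← filter_union,
    ← card_union_of_disjoint (disjoint_filter_filter disjoint_compl_right), ← filter_union,
    union_compl]

theorem equitable_of_neighborCount {C : Finset (Fin n → Fin 2)} {a : ℤ}
    (h : ∀ v, (neighborCount C v : ℤ) + (a + 1) * indicator C v + indicator C (v + 1) = a + 1) :
    let C' := C.image (· + 1)
    let C'' := (C ∪ C')ᶜ
    Disjoint C C' ∧
    (∀ v ∈ C, (neighborCount C v : ℤ) = 0 ∧ (neighborCount C' v : ℤ) = a ∧
      (neighborCount C'' v : ℤ) = n - a) ∧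
    (∀ v ∈ C', (neighborCount C v : ℤ) = a ∧ (neighborCount C' v : ℤ) = 0 ∧
      (neighborCount C'' v : ℤ) = n - a) ∧
    (∀ v ∈ C'', (neighborCount C v : ℤ) = a + 1 ∧ (neighborCount C' v : ℤ) = a + 1 ∧
      (neighborCount C'' v : ℤ) = n - 2 * a - 2) := by
  intro C' C''
  have hC : ∀ v ∈ C, v + 1 ∉ C := fun v hv hv' => by
    have := h v
    simp only [indicator, if_pos hv, if_pos hv'] at this
    linarith [(neighborCount C v).cast_nonneg (α := ℤ)]
  have hdisj : Disjoint C C' :=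
    disjoint_left.mpr fun v hv hv' => hC v hv (mem_image_add_one.mp hv')
  have htotal (v) : (neighborCount C v : ℤ) + neighborCount C' v + neighborCount C'' v = n :=
    mod_cast neighborCount_add_add_compl hdisj v
  have hcount (v) :
      (neighborCount C v : ℤ) = (a + 1) * (1 - indicator C v) - indicator C (v + 1) ∧
      (neighborCount C' v : ℤ) = (a + 1) * (1 - indicator C (v + 1)) - indicator C v ∧
      (neighborCount C'' v : ℤ) = n - neighborCount C v - neighborCount C' v := by
    have := h (v + 1)
    rw [add_add_cancel] at this
    exact ⟨by linarith [h v], by rw [neighborCount_image_add_one]; linarith,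
      by linarith [htotal v]⟩
  refine ⟨hdisj, fun v hv => ?_, fun v hv => ?_, fun v hv => ?_⟩
  all_goals obtain ⟨h1, h2, h3⟩ := hcount v
  · simp only [indicator, if_pos hv, if_neg (hC v hv)] at h1 h2
    exact ⟨by linarith, by linarith, by linarith⟩
  · have hv1 : v + 1 ∈ C := mem_image_add_one.mp hv
    have hv0 : v ∉ C := by simpa [add_add_cancel] using hC _ hv1
    simp only [indicator, if_pos hv1, if_neg hv0] at h1 h2
    exact ⟨by linarith, by linarith, by linarith⟩
  · obtain ⟨hv0, hv1⟩ := not_or.mp (mem_union.not.mp (mem_compl.mp hv))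
    simp only [indicator, if_neg hv0, if_neg (mem_image_add_one.not.mp hv1)] at h1 h2
    exact ⟨by linarith, by linarith, by linarith⟩

end Hypercube

open Hypercube

/-- An OA(N,n,2,t) of even strength t attaining the Levenshtein bound
N = 2^n(1-(n+1)/(2(t+2))) induces, with C' = C+1̄ and C'' the rest, an equitable
3-partition with quotient matrix [[0,a,n-a],[a,0,n-a],[a+1,a+1,n-2a-2]], a = 2t-n+2. -/
theorem stmt_6 (n t N : ℕ) (ht : Even t) (htn : t ≤ n)
    (C : Finset (Fin n → Fin 2)) (hcard : C.card = N)
    (hOA : ∀ s : Finset (Fin n), s.card = t → ∀ g : Fin n → Fin 2,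
      (C.filter (fun x => ∀ i ∈ s, x i = g i)).card * 2 ^ t = N)
    (heq : (N : ℝ) = 2 ^ n * (1 - (n + 1) / (2 * (t + 2)))) :
    let C' : Finset (Fin n → Fin 2) := C.image (fun x => fun i => x i + 1);
    let C'' : Finset (Fin n → Fin 2) := (C ∪ C')ᶜ;
    let a : ℤ := 2 * (t : ℤ) - n + 2;
    Disjoint C C' ∧
    (∀ v ∈ C,
      ((C.filter (fun w => hammingDist v w = 1)).card : ℤ) = 0 ∧
      ((C'.filter (fun w => hammingDist v w = 1)).card : ℤ) = a ∧
      ((C''.filter (fun w => hammingDist v w = 1)).card : ℤ) = n - a) ∧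
    (∀ v ∈ C',
      ((C.filter (fun w => hammingDist v w = 1)).card : ℤ) = a ∧
      ((C'.filter (fun w => hammingDist v w = 1)).card : ℤ) = 0 ∧
      ((C''.filter (fun w => hammingDist v w = 1)).card : ℤ) = n - a) ∧
    (∀ v ∈ C'',
      ((C.filter (fun w => hammingDist v w = 1)).card : ℤ) = a + 1 ∧
      ((C'.filter (fun w => hammingDist v w = 1)).card : ℤ) = a + 1 ∧
      ((C''.filter (fun w => hammingDist v w = 1)).card : ℤ) = n - 2 * a - 2) := by
  intro C' C'' a
  have hN : (#C : ℤ) * (2 * t + 4) = 2 ^ n * (2 * t + 3 - n) := by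
    have : (N : ℝ) * (2 * t + 4) = 2 ^ n * (2 * t + 3 - n) := by
      rw [heq]
      field_simp
      ring
    rw [hcard]
    exact_mod_cast this
  have hconst := adjPlusAntipodal_indicator_eq_const ht
    (fun _ hS hSt => walshTransform_indicator_eq_zero htn hOA hS hSt) hN
  have ha : a + 1 = 2 * t + 3 - n := by ring
  refine equitable_of_neighborCount fun v => ?_
  rw [ha, ← adjPlusAntipodal_indicator, hconst]
end
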